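/- Suppose ψ : ℝ^d → ℝ is differentiable and L-smooth with L > 0, and let (v^{s,q}) be the Markov chain coordinate descent iterates generated from an initial point v^{0,0} with step size η ∈ (0, 1/((L+1)·S·Q)], block sequence k^0,…,k^{S−1}, and Q inner updates per block, with final iterate v^{S,0}. Define Ψ := ⟨∇ψ(v^{0,0}), v^{S,0} − v^{0,0}⟩ + ((L+1)/2)·‖v^{S,0} − v^{0,0}‖². Then Ψ ≤ η·S·Q·C₁·(1 + η·(L+1)·S·Q·C₁)·‖∇ψ(v^{0,0})‖² + η·(η·(L+1)·S·Q − 1)·∑_{s=0}^{S−1} ∑_{q=0}^{Q−1} ‖∇_{k^s} ψ(v^{0,0})‖², where C₁ := η·e·L·S·Q. -/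

import Mathlib

/-- For a block `k` (blocks given by the assignment `blk : Fin d → K` of coordinates
to blocks), the vector `∇̄_k ψ(v)` agreeing with the gradient of `ψ` at `v` on the
coordinates of block `k` and zero elsewhere.  Note `‖maskedGrad blk ψ v k‖ = ‖∇_k ψ(v)‖`. -/
noncomputable def maskedGrad {d : ℕ} {K : Type*} [DecidableEq K]
    (blk : Fin d → K) (ψ : EuclideanSpace ℝ (Fin d) → ℝ)
    (v : EuclideanSpace ℝ (Fin d)) (k : K) : EuclideanSpace ℝ (Fin d) :=
  WithLp.toLp 2 (fun i => if blk i = k then gradient ψ v i else 0)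

/-! Telescoping gives `v^{S,0} - v^{0,0} = -η ∑_{s,q} ∇̄_{k^s} ψ(v^{s,q})`. Freeze every masked
gradient at `v^{0,0}`: by smoothness the error is at most `L ‖v^{s,q} - v^{0,0}‖`, and a discrete
Grönwall argument along the `S Q` steps bounds it by `((1 + ηL)^{SQ} - 1) ‖∇ψ(v^{0,0})‖`, which is
at most `C₁ ‖∇ψ(v^{0,0})‖` because `ηLSQ ≤ 1`. Masking is an orthogonal projection, so the frozen
part of the displacement contributes exactly `-η ∑ ‖∇_{k^s} ψ(v^{0,0})‖²` to the inner product;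
Cauchy–Schwarz and `‖a + b‖² ≤ 2‖a‖² + 2‖b‖²` bound the remaining terms. -/

open Finset RealInnerProductSpace

section CoordMask

variable {ι : Type*} [Fintype ι]

noncomputable def coordMask (p : ι → Prop) [DecidablePred p] :
    EuclideanSpace ℝ ι →ₗ[ℝ] EuclideanSpace ℝ ι where
  toFun x := WithLp.toLp 2 fun i => if p i then x i else 0
  map_add' x y := by ext i; simp only [PiLp.add_apply]; split_ifs <;> simp
  map_smul' c x := by ext i; simp only [PiLp.smul_apply]; split_ifs <;> simp

variable (p : ι → Prop) [DecidablePred p]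

theorem inner_coordMask_self (x : EuclideanSpace ℝ ι) :
    ⟪x, coordMask p x⟫ = ‖coordMask p x‖ ^ 2 := by
  rw [← real_inner_self_eq_norm_sq, PiLp.inner_apply, PiLp.inner_apply]
  refine sum_congr rfl fun i _ => ?_
  simp only [coordMask, LinearMap.coe_mk, AddHom.coe_mk, PiLp.toLp_apply]
  split_ifs <;> simp

theorem norm_coordMask_le (x : EuclideanSpace ℝ ι) : ‖coordMask p x‖ ≤ ‖x‖ := by
  have h : ‖coordMask p x‖ ^ 2 ≤ ‖x‖ * ‖coordMask p x‖ :=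
    inner_coordMask_self p x ▸ real_inner_le_norm _ _
  nlinarith [norm_nonneg x, norm_nonneg (coordMask p x)]

end CoordMask

section MaskedGrad

variable {d : ℕ} {K : Type*} [DecidableEq K] (blk : Fin d → K)
  (ψ : EuclideanSpace ℝ (Fin d) → ℝ)

theorem maskedGrad_eq_coordMask (x : EuclideanSpace ℝ (Fin d)) (k : K) :
    maskedGrad blk ψ x k = coordMask (blk · = k) (gradient ψ x) :=
  rfl

theorem norm_maskedGrad_le (x : EuclideanSpace ℝ (Fin d)) (k : K) :
    ‖maskedGrad blk ψ x k‖ ≤ ‖gradient ψ x‖ :=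
  norm_coordMask_le _ _

theorem norm_maskedGrad_sub_le (x y : EuclideanSpace ℝ (Fin d)) (k : K) :
    ‖maskedGrad blk ψ x k - maskedGrad blk ψ y k‖ ≤ ‖gradient ψ x - gradient ψ y‖ := by
  rw [maskedGrad_eq_coordMask, maskedGrad_eq_coordMask, ← map_sub]
  exact norm_coordMask_le _ _

theorem inner_gradient_maskedGrad (x : EuclideanSpace ℝ (Fin d)) (k : K) :
    ⟪gradient ψ x, maskedGrad blk ψ x k⟫ = ‖maskedGrad blk ψ x k‖ ^ 2 := by
  rw [maskedGrad_eq_coordMask]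
  exact inner_coordMask_self _ _

end MaskedGrad

theorem norm_sum_sq_le_card_mul {ι E : Type*} [SeminormedAddCommGroup E] (s : Finset ι)
    (f : ι → E) : ‖∑ i ∈ s, f i‖ ^ 2 ≤ #s * ∑ i ∈ s, ‖f i‖ ^ 2 :=
  (pow_le_pow_left₀ (norm_nonneg _) (norm_sum_le s f) 2).trans sq_sum_le_card_mul_sum_sq

theorem one_add_pow_sub_one_le_exp_one_mul {a : ℝ} {m N : ℕ} (ha : 0 ≤ a) (hm : m ≤ N)
    (hN : N * a ≤ 1) : (1 + a) ^ m - 1 ≤ Real.exp 1 * (N * a) := by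
  have hNa : 0 ≤ N * a := by positivity
  have hpow : (1 + a) ^ m ≤ Real.exp (N * a) :=
    calc (1 + a) ^ m ≤ (1 + a) ^ N := pow_le_pow_right₀ (by linarith) hm
      _ ≤ Real.exp a ^ N := by gcongr; linarith [Real.add_one_le_exp a]
      _ = Real.exp (N * a) := (Real.exp_nat_mul a N).symm
  have hexp : |Real.exp (N * a) - 1| ≤ 2 * |N * a| :=
    Real.abs_exp_sub_one_le (by rwa [abs_of_nonneg hNa])
  rw [abs_of_nonneg hNa] at hexp
  nlinarith [le_abs_self (Real.exp (N * a) - 1), Real.exp_one_gt_d9]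

theorem mul_mul_le_one_of_le_one_div {η L S Q : ℝ} (hη : 0 < η) (hL : 0 ≤ L) (hS : 0 ≤ S)
    (hQ : 0 ≤ Q) (h : η ≤ 1 / ((L + 1) * S * Q)) : S * Q * (η * L) ≤ 1 := by
  -- `1 / 0 = 0`, so `0 < η` rules out `S * Q = 0`.
  have hN : 0 < (L + 1) * S * Q := by
    by_contra hN
    rw [le_antisymm (not_lt.1 hN) (by positivity), div_zero] at h
    linarith
  nlinarith [(le_div_iff₀ hN).1 h, mul_nonneg hη.le (mul_nonneg hS hQ)]

theorem induction_on_stages {S Q : ℕ} {P : ℕ → ℕ → Prop} (h₀ : P 0 0)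
    (hstep : ∀ s < S, ∀ q < Q, P s q → P s (q + 1))
    (hnext : ∀ s < S, P s Q → P (s + 1) 0) :
    ∀ s < S, ∀ q ≤ Q, P s q := by
  have along : ∀ s < S, P s 0 → ∀ q ≤ Q, P s q := by
    intro s hs h0 q
    induction q with
    | zero => exact fun _ => h0
    | succ q ih => exact fun hq => hstep s hs q hq (ih (Nat.le_of_succ_le hq))
  have start : ∀ s < S, P s 0 := by
    intro s
    induction s with
    | zero => exact fun _ => h₀
    | succ s ih => exact fun hs => hnext s (by omega) (along s (by omega) (ih (by omega)) Q le_rfl)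
  exact fun s hs => along s hs (start s hs)

theorem discrete_gronwall_of_stages {S Q : ℕ} {r : ℕ → ℕ → ℝ} {η L G : ℝ}
    (hη : 0 ≤ η) (hL : 0 ≤ L) (h₀ : r 0 0 = 0)
    (hstep : ∀ s < S, ∀ q < Q, r s (q + 1) ≤ (1 + η * L) * r s q + η * G)
    (hnext : ∀ s < S, r (s + 1) 0 = r s Q) :
    ∀ s < S, ∀ q ≤ Q, L * r s q ≤ ((1 + η * L) ^ (s * Q + q) - 1) * G := by
  refine induction_on_stages (by simp [h₀]) (fun s hs q hq ih => ?_) (fun s hs ih => ?_)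
  · calc L * r s (q + 1) ≤ L * ((1 + η * L) * r s q + η * G) := by gcongr; exact hstep s hs q hq
      _ = (1 + η * L) * (L * r s q) + η * L * G := by ring
      _ ≤ (1 + η * L) * (((1 + η * L) ^ (s * Q + q) - 1) * G) + η * L * G := by gcongr
      _ = ((1 + η * L) ^ (s * Q + (q + 1)) - 1) * G := by ring
  · rwa [hnext s hs, add_mul, one_mul, add_zero]

section Descent

variable {E : Type*} [SeminormedAddCommGroup E] [NormedSpace ℝ E]

theorem norm_sub_smul_sub_le {x x₀ g c : E} {η L G : ℝ} (hη : 0 ≤ η)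
    (hg : ‖g - c‖ ≤ L * ‖x - x₀‖) (hc : ‖c‖ ≤ G) :
    ‖x - η • g - x₀‖ ≤ (1 + η * L) * ‖x - x₀‖ + η * G := by
  have hgn : ‖g‖ ≤ L * ‖x - x₀‖ + G := by linarith [norm_le_norm_add_norm_sub' g c]
  calc ‖x - η • g - x₀‖ = ‖(x - x₀) - η • g‖ := by rw [sub_right_comm]
    _ ≤ ‖x - x₀‖ + ‖η • g‖ := norm_sub_le _ _
    _ = ‖x - x₀‖ + η * ‖g‖ := by rw [norm_smul, Real.norm_of_nonneg hη]
    _ ≤ ‖x - x₀‖ + η * (L * ‖x - x₀‖ + G) := by gcongr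
    _ = (1 + η * L) * ‖x - x₀‖ + η * G := by ring

theorem sub_eq_neg_smul_sum_of_stages {S Q : ℕ} {η : ℝ} {v g : ℕ → ℕ → E}
    (hstep : ∀ s < S, ∀ q < Q, v s (q + 1) = v s q - η • g s q)
    (hnext : ∀ s < S, v (s + 1) 0 = v s Q) :
    v S 0 - v 0 0 = -(η • ∑ s ∈ range S, ∑ q ∈ range Q, g s q) := by
  rw [← sum_range_sub (v · 0), smul_sum, ← sum_neg_distrib]
  refine sum_congr rfl fun s hs => ?_
  rw [hnext s (mem_range.1 hs), ← sum_range_sub (v s), smul_sum, ← sum_neg_distrib]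
  refine sum_congr rfl fun q hq => ?_
  rw [hstep s (mem_range.1 hs) q (mem_range.1 hq)]
  abel

end Descent

theorem inner_neg_smul_add_norm_sq_le {E : Type*} [NormedAddCommGroup E]
    [InnerProductSpace ℝ E] {g a e : E} {η M N T ε : ℝ} (hη : 0 ≤ η) (hM : 0 ≤ M)
    (hga : ⟪g, a⟫ = T) (ha : ‖a‖ ^ 2 ≤ N * T) (he : ‖e‖ ≤ ε) :
    ⟪g, -(η • (a + e))⟫ + M / 2 * ‖-(η • (a + e))‖ ^ 2
      ≤ η * ‖g‖ * ε + η ^ 2 * M * ε ^ 2 + η * (η * M * N - 1) * T := by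
  have hge : -(‖g‖ * ε) ≤ ⟪g, e⟫ :=
    (neg_le_neg ((real_inner_le_norm g (-e)).trans (by rw [norm_neg]; gcongr))).trans_eq
      (by rw [inner_neg_right, neg_neg])
  have hae : ‖a + e‖ ^ 2 ≤ 2 * (N * T + ε ^ 2) :=
    calc ‖a + e‖ ^ 2 ≤ (‖a‖ + ‖e‖) ^ 2 := by gcongr; exact norm_add_le a e
      _ ≤ 2 * (‖a‖ ^ 2 + ‖e‖ ^ 2) := add_sq_le
      _ ≤ 2 * (N * T + ε ^ 2) := by gcongr
  rw [inner_neg_right, inner_smul_right, inner_add_right, hga, norm_neg, norm_smul,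
    Real.norm_of_nonneg hη, mul_pow]
  nlinarith [mul_le_mul_of_nonneg_left hae (by positivity : 0 ≤ M / 2 * η ^ 2),
    mul_le_mul_of_nonneg_left hge hη]

theorem norm_maskedGrad_sub_le_of_stages {d : ℕ} {K : Type*} [DecidableEq K]
    {blk : Fin d → K} {ψ : EuclideanSpace ℝ (Fin d) → ℝ} {L η : ℝ} (hL : 0 ≤ L) (hη : 0 ≤ η)
    (hsmooth : ∀ x y : EuclideanSpace ℝ (Fin d),
      ‖gradient ψ x - gradient ψ y‖ ≤ L * ‖x - y‖)
    {S Q : ℕ} (hSQ : (S * Q : ℕ) * (η * L) ≤ 1) {kseq : ℕ → K}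
    {v : ℕ → ℕ → EuclideanSpace ℝ (Fin d)}
    (hrecq : ∀ s < S, ∀ q < Q,
      v s (q + 1) = v s q - η • maskedGrad blk ψ (v s q) (kseq s))
    (hrecs : ∀ s < S, v (s + 1) 0 = v s Q) :
    ∀ s < S, ∀ q < Q,
      ‖maskedGrad blk ψ (v s q) (kseq s) - maskedGrad blk ψ (v 0 0) (kseq s)‖
        ≤ Real.exp 1 * ((S * Q : ℕ) * (η * L)) * ‖gradient ψ (v 0 0)‖ := by
  have hlip : ∀ s q, ‖maskedGrad blk ψ (v s q) (kseq s) - maskedGrad blk ψ (v 0 0) (kseq s)‖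
      ≤ L * ‖v s q - v 0 0‖ :=
    fun s q => (norm_maskedGrad_sub_le blk ψ _ _ _).trans (hsmooth _ _)
  have hdrift := discrete_gronwall_of_stages (S := S) (Q := Q)
    (r := fun s q => ‖v s q - v 0 0‖) hη hL (by simp)
    (fun s hs q hq => by
      simpa only [hrecq s hs q hq] using
        norm_sub_smul_sub_le hη (hlip s q) (norm_maskedGrad_le blk ψ _ _))
    (fun s hs => by simp only [hrecs s hs])
  intro s hs q hq
  calc _ ≤ L * ‖v s q - v 0 0‖ := hlip s q
    _ ≤ ((1 + η * L) ^ (s * Q + q) - 1) * ‖gradient ψ (v 0 0)‖ := hdrift s hs q hq.le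
    _ ≤ _ := by
      gcongr
      exact one_add_pow_sub_one_le_exp_one_mul (by positivity) (by nlinarith) hSQ

theorem mccd_qub_bound_general
    {d : ℕ} {K : Type*} [DecidableEq K]
    (blk : Fin d → K)
    (ψ : EuclideanSpace ℝ (Fin d) → ℝ) (L : ℝ) (hL : 0 < L)
    (hsmooth : ∀ x y : EuclideanSpace ℝ (Fin d),
      ‖gradient ψ x - gradient ψ y‖ ≤ L * ‖x - y‖)
    (S Q : ℕ)
    (η : ℝ) (hη : 0 < η) (hηub : η ≤ 1 / ((L + 1) * S * Q))
    (kseq : ℕ → K)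
    (v : ℕ → ℕ → EuclideanSpace ℝ (Fin d))
    (hrecq : ∀ s < S, ∀ q < Q,
      v s (q + 1) = v s q - η • maskedGrad blk ψ (v s q) (kseq s))
    (hrecs : ∀ s < S, v (s + 1) 0 = v s Q)
    (C₁ : ℝ) (hC₁ : C₁ = η * Real.exp 1 * L * S * Q)
    (Ψ : ℝ)
    (hΨ : Ψ = inner ℝ (gradient ψ (v 0 0)) (v S 0 - v 0 0)
      + (L + 1) / 2 * ‖v S 0 - v 0 0‖ ^ 2) :
    Ψ ≤ η * S * Q * C₁ * (1 + η * (L + 1) * S * Q * C₁) * ‖gradient ψ (v 0 0)‖ ^ 2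
        + η * (η * (L + 1) * S * Q - 1) * ∑ s ∈ Finset.range S, ∑ q ∈ Finset.range Q,
            ‖maskedGrad blk ψ (v 0 0) (kseq s)‖ ^ 2 := by
  set g₀ := gradient ψ (v 0 0)
  set gb : ℕ → EuclideanSpace ℝ (Fin d) := fun s => maskedGrad blk ψ (v 0 0) (kseq s)
  have hSQ : ((S * Q : ℕ) : ℝ) * (η * L) ≤ 1 := by
    exact_mod_cast mul_mul_le_one_of_le_one_div hη hL.le S.cast_nonneg Q.cast_nonneg hηub
  have herr : ‖∑ s ∈ range S, ∑ q ∈ range Q, (maskedGrad blk ψ (v s q) (kseq s) - gb s)‖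
      ≤ S * Q * (C₁ * ‖g₀‖) := by
    calc _ ≤ ∑ s ∈ range S, ∑ q ∈ range Q, C₁ * ‖g₀‖ :=
          norm_sum_le_of_le _ fun s hs => norm_sum_le_of_le _ fun q hq => by
            convert norm_maskedGrad_sub_le_of_stages hL.le hη.le hsmooth hSQ hrecq hrecs s
              (mem_range.1 hs) q (mem_range.1 hq) using 2
            rw [hC₁]; push_cast; ring
      _ = S * Q * (C₁ * ‖g₀‖) := by simp only [sum_const, card_range, nsmul_eq_mul]; ring
  have hsplit : v S 0 - v 0 0 = -(η • (∑ s ∈ range S, ∑ q ∈ range Q, gb s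
      + ∑ s ∈ range S, ∑ q ∈ range Q, (maskedGrad blk ψ (v s q) (kseq s) - gb s))) := by
    simp only [sub_eq_neg_smul_sum_of_stages hrecq hrecs, ← sum_add_distrib, add_sub_cancel]
  have hinner : ⟪g₀, ∑ s ∈ range S, ∑ q ∈ range Q, gb s⟫
      = ∑ s ∈ range S, ∑ q ∈ range Q, ‖gb s‖ ^ 2 := by
    simp only [inner_sum, g₀, gb, inner_gradient_maskedGrad]
  have hA : ‖∑ s ∈ range S, ∑ q ∈ range Q, gb s‖ ^ 2
      ≤ (S * Q) * ∑ s ∈ range S, ∑ q ∈ range Q, ‖gb s‖ ^ 2 := by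
    simpa only [sum_product, card_product, card_range, Nat.cast_mul] using
      norm_sum_sq_le_card_mul (range S ×ˢ range Q) (fun p => gb p.1)
  rw [hΨ, hsplit]
  refine (inner_neg_smul_add_norm_sq_le hη.le (by positivity) hinner hA herr).trans_eq ?_
  ring

/-- **Lemma 3.** For Markov chain coordinate descent iterates of an `L`-smooth
differentiable `ψ` with step size `η ∈ (0, 1/((L+1)SQ)]` and final iterate `v^{S,0}`,
letting `Ψ := ⟨∇ψ(v⁰⁰), v^{S,0} − v⁰⁰⟩ + ((L+1)/2)‖v^{S,0} − v⁰⁰‖²`, we have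
`Ψ ≤ η S Q C₁ (1 + η(L+1)SQC₁) ‖∇ψ(v⁰⁰)‖²
  + η(η(L+1)SQ − 1) ∑_{s<S} ∑_{q<Q} ‖∇_{k^s}ψ(v⁰⁰)‖²`, where `C₁ = η e L S Q`. -/
theorem mccd_qub_bound
    {d : ℕ} (hd : 1 ≤ d) {K : Type*} [Fintype K] [DecidableEq K]
    (blk : Fin d → K)
    (ψ : EuclideanSpace ℝ (Fin d) → ℝ) (L : ℝ) (hL : 0 < L)
    (hdiff : Differentiable ℝ ψ)
    (hsmooth : ∀ x y : EuclideanSpace ℝ (Fin d),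
      ‖gradient ψ x - gradient ψ y‖ ≤ L * ‖x - y‖)
    (S Q : ℕ) (hS : 1 ≤ S) (hQ : 1 ≤ Q)
    (η : ℝ) (hη : 0 < η) (hηub : η ≤ 1 / ((L + 1) * S * Q))
    (kseq : ℕ → K)
    (v : ℕ → ℕ → EuclideanSpace ℝ (Fin d))
    (hrecq : ∀ s < S, ∀ q < Q,
      v s (q + 1) = v s q - η • maskedGrad blk ψ (v s q) (kseq s))
    (hrecs : ∀ s < S, v (s + 1) 0 = v s Q)
    (C₁ : ℝ) (hC₁ : C₁ = η * Real.exp 1 * L * S * Q)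
    (Ψ : ℝ)
    (hΨ : Ψ = inner ℝ (gradient ψ (v 0 0)) (v S 0 - v 0 0)
      + (L + 1) / 2 * ‖v S 0 - v 0 0‖ ^ 2) :
    Ψ ≤ η * S * Q * C₁ * (1 + η * (L + 1) * S * Q * C₁) * ‖gradient ψ (v 0 0)‖ ^ 2
        + η * (η * (L + 1) * S * Q - 1) * ∑ s ∈ Finset.range S, ∑ q ∈ Finset.range Q,
            ‖maskedGrad blk ψ (v 0 0) (kseq s)‖ ^ 2 :=
  mccd_qub_bound_general blk ψ L hL hsmooth S Q η hη hηub kseq v hrecq hrecs C₁ hC₁ Ψ hΨ
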